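/- Let k ≥ 2, L > 0, A > 1, M > 0, and let a₁, b₁ and a₂, …, a_k be nonnegative reals with a₁ > 0. Assume a₁ ≥ 2A², b₁ ≥ 4LM√(k-1) + 2a₁L, and √(a₁)√(a_i) ≤ 2M for all 2 ≤ i ≤ k. Then -2a₁L + b₁ ≥ 2A √((1/(4a₁))(-2a₁L + b₁)² + Σ_{i=2}^k a_i L²) > 0. -/

import Mathlib

open Finset

/-! Put `c = b₁ - 2a₁L` and `S = Σ_{i ≥ 2} aᵢL²`. Squaring, the claim is `4A²(c²/(4a₁) + S) ≤ c²`,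
and each of the two summands is at most `c²/2`: the first because `a₁ ≥ 2A²`, the second because
`a₁aᵢ ≤ 4M²` gives `2a₁S ≤ 8(k-1)M²L²`, while `c ≥ 4LM√(k-1)` gives `c² ≥ 16(k-1)M²L²`. -/

theorem mul_le_sq_of_sqrt_mul_sqrt_le {x y m : ℝ} (hx : 0 ≤ x) (h : √x * √y ≤ m) :
    x * y ≤ m ^ 2 := by
  rw [← Real.sqrt_mul hx] at h
  exact (Real.sqrt_le_iff.mp h).2

theorem mul_sum_le_card_mul {R ι : Type*} [Semiring R] [PartialOrder R] [IsOrderedAddMonoid R]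
    (s : Finset ι) (f : ι → R) {x m : R} (h : ∀ i ∈ s, x * f i ≤ m) :
    x * ∑ i ∈ s, f i ≤ #s * m := by
  rw [Finset.mul_sum, ← nsmul_eq_mul]
  exact Finset.sum_le_card_nsmul s _ m h

theorem two_mul_mul_sqrt_le {a₁ A S D c : ℝ} (ha₁ : 0 < a₁) (hA : 2 * A ^ 2 ≤ a₁) (hS : 0 ≤ S)
    (hSD : a₁ * S ≤ D) (hc : 0 ≤ c) (hDc : 4 * D ≤ c ^ 2) :
    2 * A * √(1 / (4 * a₁) * c ^ 2 + S) ≤ c := by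
  have hfirst : A ^ 2 * c ^ 2 / a₁ ≤ c ^ 2 / 2 := by
    rw [div_le_div_iff₀ ha₁ two_pos]
    nlinarith [sq_nonneg c]
  have hsecond : 4 * A ^ 2 * S ≤ c ^ 2 / 2 := by linarith [mul_le_mul_of_nonneg_right hA hS]
  have hexpand : (2 * A) ^ 2 * (1 / (4 * a₁) * c ^ 2 + S) = A ^ 2 * c ^ 2 / a₁ + 4 * A ^ 2 * S := by
    field_simp
    ring
  calc 2 * A * √(1 / (4 * a₁) * c ^ 2 + S)
      ≤ √((2 * A) ^ 2) * √(1 / (4 * a₁) * c ^ 2 + S) := by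
        gcongr
        rw [Real.sqrt_sq_eq_abs]
        exact le_abs_self _
    _ = √((2 * A) ^ 2 * (1 / (4 * a₁) * c ^ 2 + S)) := (Real.sqrt_mul (sq_nonneg _) _).symm
    _ ≤ c := Real.sqrt_le_iff.mpr ⟨hc, by linarith⟩

/-- If `a₁ ≥ 2A²`, `b₁ ≥ 4LM√(k-1) + 2a₁L` and `√a₁ √aᵢ ≤ 2M` for `2 ≤ i ≤ k`,
then `-2a₁L + b₁ ≥ 2A √((1/(4a₁))(-2a₁L + b₁)² + Σ_{i=2}^k aᵢ L²) > 0`. -/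
theorem coeff_conditions_imply_system (k : ℕ) (hk : 2 ≤ k) (L A M : ℝ)
    (hL : 0 < L) (hA : 1 < A) (hM : 0 < M)
    (a : Fin k → ℝ) (b₁ : ℝ)
    (ha1 : 0 < a ⟨0, by omega⟩) (hai : ∀ i : Fin k, i ≠ ⟨0, by omega⟩ → 0 ≤ a i)
    (ha1A : a ⟨0, by omega⟩ ≥ 2 * A ^ 2)
    (hb1L : b₁ ≥ 4 * L * M * Real.sqrt ((k : ℝ) - 1) + 2 * a ⟨0, by omega⟩ * L)
    (haiM : ∀ i : Fin k, i ≠ ⟨0, by omega⟩ →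
      Real.sqrt (a ⟨0, by omega⟩) * Real.sqrt (a i) ≤ 2 * M) :
    -2 * a ⟨0, by omega⟩ * L + b₁ ≥
        2 * A * Real.sqrt (1 / (4 * a ⟨0, by omega⟩) * (-2 * a ⟨0, by omega⟩ * L + b₁) ^ 2 +
          ∑ i ∈ Finset.univ.erase (⟨0, by omega⟩ : Fin k), a i * L ^ 2) ∧
      0 < 2 * A * Real.sqrt (1 / (4 * a ⟨0, by omega⟩) * (-2 * a ⟨0, by omega⟩ * L + b₁) ^ 2 +
          ∑ i ∈ Finset.univ.erase (⟨0, by omega⟩ : Fin k), a i * L ^ 2) := by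
  set i₀ : Fin k := ⟨0, by omega⟩
  set c := -2 * a i₀ * L + b₁
  set S := ∑ i ∈ univ.erase i₀, a i * L ^ 2
  have hcard : (#(univ.erase i₀) : ℝ) = k - 1 := by
    rw [card_erase_of_mem (mem_univ _), card_univ, Fintype.card_fin, Nat.cast_pred (by omega)]
  have hk₁ : (0 : ℝ) < k - 1 := by
    rw [sub_pos, Nat.one_lt_cast]
    omega
  have hc_lb : 4 * L * M * √((k : ℝ) - 1) ≤ c := by linarith
  have hc : 0 < c := lt_of_lt_of_le (by positivity) hc_lb
  have hS : 0 ≤ S := sum_nonneg fun i hi ↦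
    mul_nonneg (hai i (ne_of_mem_erase hi)) (sq_nonneg L)
  have hSD : a i₀ * S ≤ (k - 1) * (4 * M ^ 2 * L ^ 2) := by
    rw [← hcard]
    refine mul_sum_le_card_mul _ _ fun i hi ↦ ?_
    have h := mul_le_sq_of_sqrt_mul_sqrt_le ha1.le (haiM i (ne_of_mem_erase hi))
    calc a i₀ * (a i * L ^ 2) = a i₀ * a i * L ^ 2 := by ring
      _ ≤ (2 * M) ^ 2 * L ^ 2 := by gcongr
      _ = 4 * M ^ 2 * L ^ 2 := by ring
  have hDc : 4 * ((k - 1) * (4 * M ^ 2 * L ^ 2)) ≤ c ^ 2 := by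
    calc 4 * ((k - 1) * (4 * M ^ 2 * L ^ 2)) = (4 * L * M * √((k : ℝ) - 1)) ^ 2 := by
          rw [mul_pow, Real.sq_sqrt hk₁.le]
          ring
      _ ≤ c ^ 2 := by gcongr
  refine ⟨two_mul_mul_sqrt_le ha1 ha1A hS hSD hc.le hDc, ?_⟩
  have hX : 0 < 1 / (4 * a i₀) * c ^ 2 + S := add_pos_of_pos_of_nonneg (by positivity) hS
  exact mul_pos (by linarith) (Real.sqrt_pos.mpr hX)
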